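/- arXiv:1110.6832 — 3 statements merged into one kernel-verified Lean document; each statement's English description precedes it below -/
import Mathlib

section
/- For a submodular set function ρ: 2^N → ℝ on a finite ground set N, the convex closure coincides with the Lovász extension: ρ̃(x) = ρ̂(x) for every x ∈ [0,1]^N. Consequently the Lovász extension ρ̂ is a convex function on [0,1]^N. -/
/-! For `x ∈ [0,1]^N`, let `chainWeight x S` be the length of the set of levels `θ ∈ (0,1]` at
which `{i | θ ≤ x i} = S`. This is a distribution on the chain of level sets of `x` with
marginals `x`, and the Lovász extension is the expectation of `ρ` under it; hence `ρ̃ ≤ ρ̂`.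
Conversely, Edmonds' greedy vector `y` for an ordering of `N` by decreasing `x` makes
`S ↦ ρ ∅ + y(S)` a modular minorant of the submodular `ρ` that is tight on every level set
of `x`. A modular function has the same expectation `ρ ∅ + ⟨y, x⟩ = ρ̂(x)` under every
distribution with marginals `x`, so `ρ̂ ≤ ρ̃`. Convexity follows because mixing two
distributions mixes their marginals. -/

open Finset MeasureTheory
open scoped Classical

/-- The Lovász extension `ρ̂(x) = ∫_0^1 ρ(x^θ) dθ` where `x^θ = {i : x i ≥ θ}`. -/
noncomputable def lovaszExt {N : Type} [Fintype N] [DecidableEq N]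
    (ρ : Finset N → ℝ) (x : N → ℝ) : ℝ :=
  ∫ θ in (0:ℝ)..1, ρ (Finset.univ.filter (fun i => θ ≤ x i))

/-- The convex closure `ρ̃(x)`: the minimum of `Σ_S α_S ρ(S)` over distributions
`α` on subsets with `Σ_S α_S = 1`, `α ≥ 0` and `Σ_{S ∋ i} α_S = x i` for all `i`. -/
noncomputable def convexClosure {N : Type} [Fintype N] [DecidableEq N]
    (ρ : Finset N → ℝ) (x : N → ℝ) : ℝ :=
  sInf { z : ℝ | ∃ α : Finset N → ℝ, (∀ S, 0 ≤ α S) ∧ (∑ S : Finset N, α S = 1) ∧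
    (∀ i : N, ∑ S ∈ Finset.univ.filter (fun S : Finset N => i ∈ S), α S = x i) ∧
    z = ∑ S : Finset N, α S * ρ S }

section Submodular

variable {N : Type} [DecidableEq N]

def IsSubmodular (ρ : Finset N → ℝ) : Prop :=
  ∀ A B : Finset N, ρ (A ∪ B) + ρ (A ∩ B) ≤ ρ A + ρ B

theorem IsSubmodular.sub_le_sub_of_subset {ρ : Finset N → ℝ} (hρ : IsSubmodular ρ)
    {A B : Finset N} (hAB : A ⊆ B) {i : N} (hi : i ∉ B) :
    ρ (insert i B) - ρ B ≤ ρ (insert i A) - ρ A := by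
  have h := hρ (insert i A) B
  rw [insert_union, union_eq_right.2 hAB, insert_inter_of_notMem hi,
    inter_eq_left.2 hAB] at h
  linarith

end Submodular

section Greedy

variable {N β : Type} [Fintype N] [LinearOrder β]

theorem subset_filter_rank_lt {r : N → β} (hr : Function.Injective r) {s : Finset N}
    {a : N} (ha : a ∉ s) (hmax : ∀ j ∈ s, r j ≤ r a) : s ⊆ univ.filter fun j => r j < r a :=
  fun j hj => mem_filter.2 ⟨mem_univ j,
    (hmax j hj).lt_of_ne fun h => ha (hr h ▸ hj)⟩

variable [DecidableEq N]

noncomputable def greedyVector (ρ : Finset N → ℝ) (r : N → β) (i : N) : ℝ :=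
  ρ (insert i (univ.filter fun j => r j < r i)) - ρ (univ.filter fun j => r j < r i)

theorem IsSubmodular.add_sum_greedyVector_le {ρ : Finset N → ℝ} (hρ : IsSubmodular ρ)
    {r : N → β} (hr : Function.Injective r) (S : Finset N) :
    ρ ∅ + ∑ i ∈ S, greedyVector ρ r i ≤ ρ S := by
  induction S using Finset.induction_on_max_value r with
  | empty => simp
  | insert a s ha hmax ih =>
    have hgain := hρ.sub_le_sub_of_subset (subset_filter_rank_lt hr ha hmax) (i := a) (by simp)
    rw [sum_insert ha, greedyVector]
    linarith

theorem add_sum_greedyVector_eq_of_lowerSet (ρ : Finset N → ℝ) {r : N → β}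
    (hr : Function.Injective r) (S : Finset N)
    (hS : ∀ i ∈ S, ∀ j, r j < r i → j ∈ S) :
    ρ ∅ + ∑ i ∈ S, greedyVector ρ r i = ρ S := by
  induction S using Finset.induction_on_max_value r with
  | empty => simp
  | insert a s ha hmax ih =>
    have hs : (univ.filter fun j => r j < r a) = s := by
      refine (subset_filter_rank_lt hr ha hmax).antisymm' fun j hj => ?_
      have hja : r j < r a := (mem_filter.1 hj).2
      exact (mem_insert.1 (hS a (mem_insert_self a s) j hja)).resolve_left
        (by rintro rfl; exact hja.false)
    have ih := ih fun i hi j hji => (mem_insert.1 (hS i (mem_insert_of_mem hi) j hji)).resolve_left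
      (by rintro rfl; exact (hji.trans_le (hmax i hi)).false)
    rw [sum_insert ha, greedyVector, hs]
    linarith

end Greedy

section Chain

variable {N : Type} [Fintype N] [DecidableEq N]

noncomputable def levelSet (x : N → ℝ) (θ : ℝ) : Finset N := univ.filter fun i => θ ≤ x i

theorem IsSubmodular.exists_modular_minorant_eq_on_levelSet {ρ : Finset N → ℝ}
    (hρ : IsSubmodular ρ) (x : N → ℝ) :
    ∃ y : N → ℝ, (∀ S, ρ ∅ + ∑ i ∈ S, y i ≤ ρ S) ∧
      ∀ θ, ρ ∅ + ∑ i ∈ levelSet x θ, y i = ρ (levelSet x θ) := by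
  -- rank by decreasing `x`, ties broken by an enumeration: level sets are then initial segments
  let r : N → ℝ ×ₗ Fin (Fintype.card N) := fun i => toLex (-x i, Fintype.equivFin N i)
  have hr : Function.Injective r := fun i j h =>
    (Fintype.equivFin N).injective (Prod.ext_iff.1 (toLex.injective h)).2
  refine ⟨greedyVector ρ r, hρ.add_sum_greedyVector_le hr, fun θ =>
    add_sum_greedyVector_eq_of_lowerSet ρ hr _ fun i hi j hji => ?_⟩
  simp only [levelSet, mem_filter, mem_univ, true_and] at hi ⊢
  rcases Prod.Lex.toLex_lt_toLex.1 hji with h | ⟨h, -⟩ <;> linarith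

theorem measurableSet_levelSet_eq (x : N → ℝ) (S : Finset N) :
    MeasurableSet {θ | levelSet x θ = S} := by
  have h : {θ | levelSet x θ = S} =
      ⋂ i, if i ∈ S then Set.Iic (x i) else Set.Ioi (x i) := by
    ext θ
    simp only [levelSet, Set.mem_ofPred_eq, Finset.ext_iff, mem_filter, mem_univ, true_and,
      Set.mem_iInter]
    refine forall_congr' fun i => ?_
    split_ifs with hi <;> simp [hi]
  rw [h]
  exact MeasurableSet.iInter fun i => by split_ifs <;> measurability

noncomputable def chainWeight (x : N → ℝ) (S : Finset N) : ℝ :=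
  volume.real (Set.Ioc 0 1 ∩ {θ | levelSet x θ = S})

theorem sum_chainWeight_mul (x : N → ℝ) (w : Finset N → ℝ) :
    ∑ S, chainWeight x S * w S = ∫ θ in Set.Ioc 0 1, w (levelSet x θ) := by
  calc ∑ S, chainWeight x S * w S
      = ∑ S, ∫ θ in Set.Ioc 0 1, {θ | levelSet x θ = S}.indicator (fun _ => w S) θ := by
        refine sum_congr rfl fun S _ => ?_
        rw [setIntegral_indicator (measurableSet_levelSet_eq x S), setIntegral_const,
          smul_eq_mul, chainWeight]
    _ = ∫ θ in Set.Ioc 0 1, ∑ S, {θ | levelSet x θ = S}.indicator (fun _ => w S) θ :=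
        (integral_finsetSum _ fun S _ => by
          exact (integrableOn_const measure_Ioc_lt_top.ne).indicator
            (measurableSet_levelSet_eq x S)).symm
    _ = ∫ θ in Set.Ioc 0 1, w (levelSet x θ) := by
        simp [Set.indicator_apply]

theorem lovaszExt_eq_sum_chainWeight_mul (ρ : Finset N → ℝ) (x : N → ℝ) :
    lovaszExt ρ x = ∑ S, chainWeight x S * ρ S := by
  rw [sum_chainWeight_mul, lovaszExt, intervalIntegral.integral_of_le zero_le_one]
  rfl

structure IsDistribWithMarginals (α : Finset N → ℝ) (x : N → ℝ) : Prop where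
  nonneg : ∀ S, 0 ≤ α S
  sum_eq_one : ∑ S, α S = 1
  marginal : ∀ i, ∑ S ∈ univ.filter (fun S : Finset N => i ∈ S), α S = x i

theorem isDistribWithMarginals_chainWeight {x : N → ℝ} (hx : ∀ i, x i ∈ Set.Icc (0:ℝ) 1) :
    IsDistribWithMarginals (chainWeight x) x where
  nonneg _ := measureReal_nonneg
  sum_eq_one := by
    simpa using sum_chainWeight_mul x fun _ => 1
  marginal i := by
    have h := sum_chainWeight_mul x fun S => if i ∈ S then 1 else 0
    simp only [mul_ite, mul_one, mul_zero, ← sum_filter] at h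
    have hind : (fun θ => if i ∈ levelSet x θ then (1:ℝ) else 0) =
        (Set.Iic (x i)).indicator fun _ => 1 := by
      ext θ
      simp [levelSet, Set.indicator_apply]
    rw [h, hind, setIntegral_indicator measurableSet_Iic, setIntegral_const, Set.Ioc_inter_Iic,
      min_eq_right (hx i).2, Real.volume_real_Ioc_of_le (hx i).1, smul_eq_mul, mul_one, sub_zero]

theorem IsDistribWithMarginals.sum_mul_add_sum {α : Finset N → ℝ} {x : N → ℝ}
    (hα : IsDistribWithMarginals α x) (c : ℝ) (y : N → ℝ) :
    ∑ S, α S * (c + ∑ i ∈ S, y i) = c + ∑ i, y i * x i := by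
  have hswap : ∑ S, α S * ∑ i ∈ S, y i = ∑ i, y i * x i := by
    simp_rw [mul_sum]
    rw [sum_comm' (t' := univ) (s' := fun i => univ.filter fun S : Finset N => i ∈ S) (by simp)]
    simp_rw [← hα.marginal, mul_sum, mul_comm]
  simp only [mul_add, sum_add_distrib, ← sum_mul, hα.sum_eq_one, one_mul, hswap]

theorem IsDistribWithMarginals.smul_add_smul {α β : Finset N → ℝ} {x y : N → ℝ}
    (hα : IsDistribWithMarginals α x) (hβ : IsDistribWithMarginals β y) {a b : ℝ}
    (ha : 0 ≤ a) (hb : 0 ≤ b) (hab : a + b = 1) :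
    IsDistribWithMarginals (a • α + b • β) (a • x + b • y) where
  nonneg S := add_nonneg (mul_nonneg ha (hα.nonneg S)) (mul_nonneg hb (hβ.nonneg S))
  sum_eq_one := by
    simp [sum_add_distrib, ← mul_sum, hα.sum_eq_one, hβ.sum_eq_one, hab]
  marginal i := by
    simp [sum_add_distrib, ← mul_sum, hα.marginal, hβ.marginal]

theorem IsSubmodular.lovaszExt_le {ρ : Finset N → ℝ} (hρ : IsSubmodular ρ) {x : N → ℝ}
    (hx : ∀ i, x i ∈ Set.Icc (0:ℝ) 1) {α : Finset N → ℝ} (hα : IsDistribWithMarginals α x) :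
    lovaszExt ρ x ≤ ∑ S, α S * ρ S := by
  obtain ⟨y, hy_le, hy_eq⟩ := hρ.exists_modular_minorant_eq_on_levelSet x
  calc lovaszExt ρ x = lovaszExt (fun S => ρ ∅ + ∑ i ∈ S, y i) x := by
        simp only [lovaszExt]
        exact intervalIntegral.integral_congr fun θ _ => (hy_eq θ).symm
    _ = ρ ∅ + ∑ i, y i * x i := by
        rw [lovaszExt_eq_sum_chainWeight_mul,
          (isDistribWithMarginals_chainWeight hx).sum_mul_add_sum]
    _ = ∑ S, α S * (ρ ∅ + ∑ i ∈ S, y i) := (hα.sum_mul_add_sum _ _).symm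
    _ ≤ ∑ S, α S * ρ S := sum_le_sum fun S _ => mul_le_mul_of_nonneg_left (hy_le S) (hα.nonneg S)

theorem IsSubmodular.isLeast_lovaszExt {ρ : Finset N → ℝ} (hρ : IsSubmodular ρ) {x : N → ℝ}
    (hx : ∀ i, x i ∈ Set.Icc (0:ℝ) 1) :
    IsLeast ((fun α => ∑ S, α S * ρ S) '' {α | IsDistribWithMarginals α x}) (lovaszExt ρ x) :=
  ⟨⟨chainWeight x, isDistribWithMarginals_chainWeight hx,
      (lovaszExt_eq_sum_chainWeight_mul ρ x).symm⟩,
    by rintro _ ⟨α, hα, rfl⟩; exact hρ.lovaszExt_le hx hα⟩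

theorem convexClosure_eq_sInf (ρ : Finset N → ℝ) (x : N → ℝ) :
    convexClosure ρ x =
      sInf ((fun α => ∑ S, α S * ρ S) '' {α | IsDistribWithMarginals α x}) := by
  refine congrArg sInf (Set.ext fun z => ⟨?_, ?_⟩)
  · rintro ⟨α, h0, h1, h2, rfl⟩
    exact ⟨α, ⟨h0, h1, h2⟩, rfl⟩
  · rintro ⟨α, ⟨h0, h1, h2⟩, rfl⟩
    exact ⟨α, h0, h1, h2, rfl⟩

theorem IsSubmodular.convexClosure_eq_lovaszExt {ρ : Finset N → ℝ} (hρ : IsSubmodular ρ)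
    {x : N → ℝ} (hx : ∀ i, x i ∈ Set.Icc (0:ℝ) 1) : convexClosure ρ x = lovaszExt ρ x := by
  rw [convexClosure_eq_sInf]
  exact (hρ.isLeast_lovaszExt hx).csInf_eq

theorem IsSubmodular.convexOn_lovaszExt {ρ : Finset N → ℝ} (hρ : IsSubmodular ρ) :
    ConvexOn ℝ {x : N → ℝ | ∀ i, x i ∈ Set.Icc (0:ℝ) 1} (lovaszExt ρ) := by
  have hcube : Convex ℝ {x : N → ℝ | ∀ i, x i ∈ Set.Icc (0:ℝ) 1} := by
    simpa [Set.pi] using convex_pi fun i (_ : i ∈ Set.univ) => convex_Icc (0:ℝ) 1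
  refine ⟨hcube, fun x hx y hy a b ha hb hab => ?_⟩
  calc lovaszExt ρ (a • x + b • y)
      ≤ ∑ S, (a • chainWeight x + b • chainWeight y) S * ρ S :=
        hρ.lovaszExt_le (hcube hx hy ha hb hab)
          ((isDistribWithMarginals_chainWeight hx).smul_add_smul
            (isDistribWithMarginals_chainWeight hy) ha hb hab)
    _ = a • lovaszExt ρ x + b • lovaszExt ρ y := by
        simp [lovaszExt_eq_sum_chainWeight_mul, add_mul, sum_add_distrib, mul_sum, mul_assoc]

end Chain

/-- For a submodular set function `ρ` on a finite ground set `N`,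
the convex closure coincides with the Lovász extension on `[0,1]^N`; consequently
the Lovász extension is convex on `[0,1]^N`. -/
theorem convexClosure_eq_lovaszExt_and_convex {N : Type} [Fintype N] [DecidableEq N]
    (ρ : Finset N → ℝ)
    (hsub : ∀ A B : Finset N, ρ (A ∪ B) + ρ (A ∩ B) ≤ ρ A + ρ B) :
    (∀ x : N → ℝ, (∀ i, x i ∈ Set.Icc (0:ℝ) 1) → convexClosure ρ x = lovaszExt ρ x) ∧
    ConvexOn ℝ { x : N → ℝ | ∀ i, x i ∈ Set.Icc (0:ℝ) 1 } (lovaszExt ρ) :=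
  ⟨fun _ hx => IsSubmodular.convexClosure_eq_lovaszExt hsub hx,
    IsSubmodular.convexOn_lovaszExt hsub⟩
end

section
/- There is a universal constant C such that for every finite metric space (V,d) with |V| = n ≥ 2 and every weight function w: V×V → ℝ≥0 there is a 1-Lipschitz map g: V → ℝ (|g(u)−g(v)| ≤ d(u,v) for all u,v) with Σ_{u,v∈V} w(u,v)·d(u,v) ≤ C·(log n)·Σ_{u,v∈V} w(u,v)·|g(u)−g(v)|. Moreover, if w is supported on at most k ≥ 2 pairs, then there is such a g with Σ_{u,v} w(u,v)·d(u,v) ≤ C·(log k)·Σ_{u,v} w(u,v)·|g(u)−g(v)|. -/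
open Finset
open scoped Classical

/-!
Bourgain's random-subset argument. Let `X` be the set of points carrying weight and
`#X < 2 ^ (L + 1)`. For `u, v ∈ X` at distance `D`, let `ρ j` be the least radius at which both
closed balls around `u` and `v` contain `2 ^ j` points of `X`, capped at `D / 3`, so that
`ρ 0 = 0` and `ρ L = D / 3`. If `ρ j < ρ (j + 1)`, one of the open balls of radius `ρ (j + 1)`,
say around `u`, has fewer than `2 ^ (j + 1)` points, while the closed ball of radius `ρ j` around
`v` has at least `2 ^ j`. A random subset `S ⊆ X` of density `2 ^ -(j + 2)` misses the first ball
and meets the second with probability at least `1 / 10`, and then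
`d(u, S) - d(v, S) ≥ ρ (j + 1) - ρ j`. Telescoping,
`D ≤ 30 * ∑ j < L, 𝔼 |d(u, S_j) - d(v, S_j)|`; summing against `w` and taking the best `S`, the
contraction `d(·, S)` has distortion at most `30 L`, which is `O(log n)`, resp. `O(log k)`.
-/

open Metric

-- the probability that a random subset of `X`, containing each point independently with
-- probability `p`, equals `S ⊆ X`
def bernoulliWeight {α : Type*} (X : Finset α) (p : ℝ) (S : Finset α) : ℝ :=
  p ^ #S * (1 - p) ^ (#X - #S)

namespace bernoulliWeight

variable {α : Type*} {X A B : Finset α} {p : ℝ}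

lemma nonneg (hp0 : 0 ≤ p) (hp1 : p ≤ 1) (S : Finset α) : 0 ≤ bernoulliWeight X p S := by
  unfold bernoulliWeight
  have : 0 ≤ 1 - p := by linarith
  positivity

lemma sum_powerset (X : Finset α) (p : ℝ) : ∑ S ∈ X.powerset, bernoulliWeight X p S = 1 := by
  simp [bernoulliWeight, sum_pow_mul_eq_add_pow]

lemma sum_powerset_disjoint (hA : A ⊆ X) (p : ℝ) :
    ∑ S ∈ X.powerset with Disjoint S A, bernoulliWeight X p S = (1 - p) ^ #A := by
  have hfilter : {S ∈ X.powerset | Disjoint S A} = (X \ A).powerset := by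
    ext S
    simp only [mem_filter, mem_powerset, subset_sdiff]
  have hcard : #(X \ A) = #X - #A := card_sdiff_of_subset hA
  have hweight : ∀ S ∈ (X \ A).powerset,
      bernoulliWeight X p S = (1 - p) ^ #A * bernoulliWeight (X \ A) p S := by
    intro S hS
    have : #S ≤ #(X \ A) := card_le_card (mem_powerset.mp hS)
    have : #A ≤ #X := card_le_card hA
    rw [bernoulliWeight, bernoulliWeight, show #X - #S = #A + (#(X \ A) - #S) by omega,
      pow_add]
    ring
  rw [hfilter, sum_congr rfl hweight, ← mul_sum, sum_powerset, mul_one]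

lemma sum_powerset_disjoint_not_disjoint (hA : A ⊆ X) (hB : B ⊆ X) (hAB : Disjoint A B)
    (p : ℝ) :
    ∑ S ∈ X.powerset with Disjoint S A ∧ ¬Disjoint S B, bernoulliWeight X p S =
      (1 - p) ^ #A - (1 - p) ^ (#A + #B) := by
  have hsplit := sum_filter_add_sum_filter_not {S ∈ X.powerset | Disjoint S A}
    (fun S => Disjoint S B) (bernoulliWeight X p)
  simp only [filter_filter, ← disjoint_union_right] at hsplit
  rw [sum_powerset_disjoint hA, sum_powerset_disjoint (union_subset hA hB),
    card_union_of_disjoint hAB] at hsplit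
  linarith

lemma sum_mul_le {f : Finset α → ℝ} {M : ℝ} (hp0 : 0 ≤ p) (hp1 : p ≤ 1)
    (hf : ∀ S ∈ X.powerset, f S ≤ M) :
    ∑ S ∈ X.powerset, bernoulliWeight X p S * f S ≤ M :=
  calc ∑ S ∈ X.powerset, bernoulliWeight X p S * f S
      ≤ ∑ S ∈ X.powerset, bernoulliWeight X p S * M :=
        sum_le_sum fun S hS => mul_le_mul_of_nonneg_left (hf S hS) (nonneg hp0 hp1 S)
    _ = M := by rw [← sum_mul, sum_powerset, one_mul]

end bernoulliWeight

lemma one_div_ten_le_one_sub_pow_sub_pow {p : ℝ} (hp0 : 0 ≤ p) (hp1 : p ≤ 1) {m n : ℕ}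
    (hm : m * p ≤ 1 / 2) (hn : 1 / 4 ≤ n * p) :
    1 / 10 ≤ (1 - p) ^ m - (1 - p) ^ (m + n) := by
  have hbern_m : 1 - m * p ≤ (1 - p) ^ m := by
    simpa [← sub_eq_add_neg] using one_add_mul_le_pow (a := -p) (by linarith) m
  have hbern_n : 1 + n * p ≤ (1 + p) ^ n := one_add_mul_le_pow (by linarith) n
  have hprod : (1 - p) ^ n * (1 + p) ^ n ≤ 1 := by
    rw [← mul_pow]
    exact pow_le_one₀ (by nlinarith) (by nlinarith)
  have hpow_n : (1 - p) ^ n ≤ 4 / 5 := by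
    nlinarith [pow_nonneg (sub_nonneg.mpr hp1) n]
  rw [pow_add]
  nlinarith

section Metric

variable {V : Type*} [MetricSpace V]

lemma sub_le_abs_infDist_sub_infDist {S : Set V} {a b x : V} {r r' : ℝ}
    (haS : ∀ y ∈ S, r ≤ dist a y) (hx : x ∈ S) (hbx : dist b x ≤ r') :
    r - r' ≤ |infDist a S - infDist b S| := by
  have ha : r ≤ infDist a S := (le_infDist ⟨x, hx⟩).mpr haS
  have hb : infDist b S ≤ r' := (infDist_le_dist_of_mem hx).trans hbx
  exact (sub_le_sub ha hb).trans (le_abs_self _)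

noncomputable def expectedGap (X : Finset V) (p : ℝ) (a b : V) : ℝ :=
  ∑ S ∈ X.powerset, bernoulliWeight X p S * |infDist a (S : Set V) - infDist b (S : Set V)|

lemma expectedGap_comm (X : Finset V) (p : ℝ) (a b : V) :
    expectedGap X p a b = expectedGap X p b a := by
  simp only [expectedGap, abs_sub_comm]

lemma expectedGap_nonneg {p : ℝ} (hp0 : 0 ≤ p) (hp1 : p ≤ 1) (X : Finset V) (a b : V) :
    0 ≤ expectedGap X p a b :=
  sum_nonneg fun S _ => mul_nonneg (bernoulliWeight.nonneg hp0 hp1 S) (abs_nonneg _)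

lemma sub_le_ten_mul_expectedGap {X : Finset V} {p : ℝ} (hp0 : 0 ≤ p) (hp1 : p ≤ 1)
    {a b : V} {r r' : ℝ} (hrr : r' ≤ r) (hsep : r + r' ≤ dist a b)
    (hA : #{x ∈ X | dist a x < r} * p ≤ 1 / 2) (hB : 1 / 4 ≤ #{x ∈ X | dist b x ≤ r'} * p) :
    r - r' ≤ 10 * expectedGap X p a b := by
  set A := {x ∈ X | dist a x < r}
  set B := {x ∈ X | dist b x ≤ r'}
  set good := {S ∈ X.powerset | Disjoint S A ∧ ¬Disjoint S B}
  have hAB : Disjoint A B := by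
    refine disjoint_filter.mpr fun x _ hax hbx => ?_
    linarith [dist_triangle_right a b x]
  have hprob : 1 / 10 ≤ ∑ S ∈ good, bernoulliWeight X p S := by
    rw [bernoulliWeight.sum_powerset_disjoint_not_disjoint (filter_subset _ _)
      (filter_subset _ _) hAB]
    exact one_div_ten_le_one_sub_pow_sub_pow hp0 hp1 hA hB
  have hgap : ∀ S ∈ good, r - r' ≤ |infDist a (S : Set V) - infDist b (S : Set V)| := by
    intro S hS
    obtain ⟨hSX, hSA, hSB⟩ := mem_filter.mp hS
    obtain ⟨x, hxS, hxB⟩ := not_disjoint_iff.mp hSB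
    refine sub_le_abs_infDist_sub_infDist (fun y hy => ?_) hxS (mem_filter.mp hxB).2
    by_contra! hay
    exact disjoint_left.mp hSA hy (mem_filter.mpr ⟨mem_powerset.mp hSX hy, hay⟩)
  have hμ : ∀ S, 0 ≤ bernoulliWeight X p S := bernoulliWeight.nonneg hp0 hp1
  calc r - r' ≤ 10 * ((r - r') * ∑ S ∈ good, bernoulliWeight X p S) := by nlinarith
    _ = 10 * ∑ S ∈ good, bernoulliWeight X p S * (r - r') := by
      rw [← sum_mul, mul_comm (r - r')]
    _ ≤ 10 * ∑ S ∈ good, bernoulliWeight X p S *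
          |infDist a (S : Set V) - infDist b (S : Set V)| := by
      gcongr with S hS
      · exact hμ S
      · exact hgap S hS
    _ ≤ 10 * expectedGap X p a b := by
      gcongr
      exact sum_le_sum_of_subset_of_nonneg (filter_subset _ _) fun S _ _ =>
        mul_nonneg (hμ S) (abs_nonneg _)

variable (X : Finset V) (u v : V)

noncomputable def bourgainCandidates (j : ℕ) : Finset ℝ :=
  {s ∈ X.image (dist u) ∪ X.image (dist v) |
    2 ^ j ≤ #{x ∈ X | dist u x ≤ s} ∧ 2 ^ j ≤ #{x ∈ X | dist v x ≤ s}}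

noncomputable def bourgainRadius (j : ℕ) : ℝ :=
  (insert (dist u v / 3) (bourgainCandidates X u v j)).min' (insert_nonempty _ _)

lemma bourgainRadius_le (j : ℕ) : bourgainRadius X u v j ≤ dist u v / 3 :=
  min'_le _ _ (mem_insert_self _ _)

lemma bourgainRadius_nonneg (j : ℕ) : 0 ≤ bourgainRadius X u v j := by
  refine le_min' _ _ _ fun s hs => ?_
  rcases mem_insert.mp hs with rfl | hs
  · positivity
  · simp only [bourgainCandidates, mem_filter, mem_union, mem_image] at hs
    obtain ⟨⟨x, -, rfl⟩ | ⟨x, -, rfl⟩, -⟩ := hs <;> exact dist_nonneg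

lemma bourgainRadius_eq_or_two_pow_le_card (j : ℕ) :
    bourgainRadius X u v j = dist u v / 3 ∨
      (2 ^ j ≤ #{x ∈ X | dist u x ≤ bourgainRadius X u v j} ∧
        2 ^ j ≤ #{x ∈ X | dist v x ≤ bourgainRadius X u v j}) := by
  rcases mem_insert.mp (min'_mem (insert _ (bourgainCandidates X u v j)) (insert_nonempty _ _))
    with h | h
  · exact .inl h
  · exact .inr (mem_filter.mp h).2

variable {X u v}

lemma bourgainRadius_le_of_mem {j : ℕ} {s : ℝ} {x : V} (hx : x ∈ X)
    (hs : dist u x = s ∨ dist v x = s)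
    (hu : 2 ^ j ≤ #{x ∈ X | dist u x ≤ s}) (hv : 2 ^ j ≤ #{x ∈ X | dist v x ≤ s}) :
    bourgainRadius X u v j ≤ s := by
  refine min'_le _ _ (mem_insert_of_mem (mem_filter.mpr ⟨?_, hu, hv⟩))
  rcases hs with hs | hs
  · exact mem_union_left _ (mem_image.mpr ⟨x, hx, hs⟩)
  · exact mem_union_right _ (mem_image.mpr ⟨x, hx, hs⟩)

lemma bourgainRadius_zero (hu : u ∈ X) (hv : v ∈ X) : bourgainRadius X u v 0 = 0 := by
  refine le_antisymm (bourgainRadius_le_of_mem hu (.inl (dist_self u)) ?_ ?_)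
    (bourgainRadius_nonneg X u v 0)
  · exact card_pos.mpr ⟨u, mem_filter.mpr ⟨hu, (dist_self u).le⟩⟩
  · exact card_pos.mpr ⟨v, mem_filter.mpr ⟨hv, (dist_self v).le⟩⟩

lemma card_ball_lt_two_pow_or_card_ball_lt_two_pow (j : ℕ) :
    #{x ∈ X | dist u x < bourgainRadius X u v j} < 2 ^ j ∨
      #{x ∈ X | dist v x < bourgainRadius X u v j} < 2 ^ j := by
  set ρ := bourgainRadius X u v j
  by_contra! h
  obtain ⟨hu, hv⟩ := h
  obtain ⟨xu, hxu, hxu_max⟩ := exists_max_image {x ∈ X | dist u x < ρ} (dist u)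
    (card_pos.mp ((Nat.one_le_two_pow).trans hu))
  obtain ⟨xv, hxv, hxv_max⟩ := exists_max_image {x ∈ X | dist v x < ρ} (dist v)
    (card_pos.mp ((Nat.one_le_two_pow).trans hv))
  -- the open balls of radius `ρ` are closed balls of the smaller candidate radius `s`
  set s := max (dist u xu) (dist v xv)
  have hs_lt : s < ρ := max_lt (mem_filter.mp hxu).2 (mem_filter.mp hxv).2
  have hcu : 2 ^ j ≤ #{x ∈ X | dist u x ≤ s} := hu.trans <| card_le_card fun x hx =>
    mem_filter.mpr ⟨(mem_filter.mp hx).1, (hxu_max x hx).trans (le_max_left _ _)⟩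
  have hcv : 2 ^ j ≤ #{x ∈ X | dist v x ≤ s} := hv.trans <| card_le_card fun x hx =>
    mem_filter.mpr ⟨(mem_filter.mp hx).1, (hxv_max x hx).trans (le_max_right _ _)⟩
  have hρ_le : ρ ≤ s := by
    rcases max_choice (dist u xu) (dist v xv) with h | h
    · exact bourgainRadius_le_of_mem (mem_filter.mp hxu).1 (.inl h.symm) hcu hcv
    · exact bourgainRadius_le_of_mem (mem_filter.mp hxv).1 (.inr h.symm) hcu hcv
  linarith

lemma bourgainRadius_eq_of_card_lt {L : ℕ} (hL : #X < 2 ^ (L + 1)) :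
    bourgainRadius X u v L = dist u v / 3 := by
  refine (bourgainRadius_le X u v L).eq_or_lt.resolve_right fun hlt => ?_
  obtain ⟨hu, hv⟩ := (bourgainRadius_eq_or_two_pow_le_card X u v L).resolve_left hlt.ne
  set ρ := bourgainRadius X u v L
  have hdisj : Disjoint {x ∈ X | dist u x ≤ ρ} {x ∈ X | dist v x ≤ ρ} := by
    refine disjoint_filter.mpr fun x _ hux hvx => ?_
    linarith [dist_triangle_right u v x, bourgainRadius_nonneg X u v L]
  have : 2 ^ (L + 1) ≤ #X :=
    calc 2 ^ (L + 1) = 2 ^ L + 2 ^ L := by ring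
      _ ≤ #({x ∈ X | dist u x ≤ ρ} ∪ {x ∈ X | dist v x ≤ ρ}) := by
        rw [card_union_of_disjoint hdisj]; omega
      _ ≤ #X := card_le_card (union_subset (filter_subset _ _) (filter_subset _ _))
  omega

lemma bourgainRadius_succ_sub_le (j : ℕ) :
    bourgainRadius X u v (j + 1) - bourgainRadius X u v j ≤
      10 * expectedGap X (1 / 2 ^ (j + 2)) u v := by
  have hp0 : (0 : ℝ) ≤ 1 / 2 ^ (j + 2) := by positivity
  have hp1 : (1 : ℝ) / 2 ^ (j + 2) ≤ 1 :=
    div_le_one_of_le₀ (one_le_pow₀ one_le_two) (by positivity)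
  by_cases hle : bourgainRadius X u v (j + 1) ≤ bourgainRadius X u v j
  · linarith [expectedGap_nonneg hp0 hp1 X u v]
  have hlt := not_le.mp hle
  have hρ_le := bourgainRadius_le X u v (j + 1)
  have hsep : bourgainRadius X u v (j + 1) + bourgainRadius X u v j ≤ dist u v := by
    linarith [dist_nonneg (x := u) (y := v)]
  obtain ⟨hu, hv⟩ :=
    (bourgainRadius_eq_or_two_pow_le_card X u v j).resolve_left (by linarith)
  have hsmall : ∀ n : ℕ, n < 2 ^ (j + 1) → (n : ℝ) * (1 / 2 ^ (j + 2)) ≤ 1 / 2 := by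
    intro n hn
    have : (n : ℝ) ≤ 2 ^ (j + 1) := by exact_mod_cast hn.le
    rw [pow_succ 2 (j + 1)]
    field_simp
    linarith
  have hlarge : ∀ n : ℕ, 2 ^ j ≤ n → 1 / 4 ≤ (n : ℝ) * (1 / 2 ^ (j + 2)) := by
    intro n hn
    have : (2 : ℝ) ^ j ≤ n := by exact_mod_cast hn
    rw [pow_add]
    field_simp
    linarith
  rcases card_ball_lt_two_pow_or_card_ball_lt_two_pow (X := X) (u := u) (v := v) (j + 1)
    with h | h
  · exact sub_le_ten_mul_expectedGap hp0 hp1 hlt.le hsep (hsmall _ h) (hlarge _ hv)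
  · rw [expectedGap_comm]
    exact sub_le_ten_mul_expectedGap hp0 hp1 hlt.le (by rwa [dist_comm]) (hsmall _ h)
      (hlarge _ hu)

lemma dist_le_thirty_mul_sum_expectedGap {L : ℕ} (hL : #X < 2 ^ (L + 1)) (hu : u ∈ X)
    (hv : v ∈ X) :
    dist u v ≤ 30 * ∑ j ∈ range L, expectedGap X (1 / 2 ^ (j + 2)) u v :=
  calc dist u v = 3 * (bourgainRadius X u v L - bourgainRadius X u v 0) := by
        rw [bourgainRadius_eq_of_card_lt hL, bourgainRadius_zero hu hv]; ring
    _ = 3 * ∑ j ∈ range L, (bourgainRadius X u v (j + 1) - bourgainRadius X u v j) := by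
        rw [sum_range_sub]
    _ ≤ 3 * ∑ j ∈ range L, 10 * expectedGap X (1 / 2 ^ (j + 2)) u v := by
        gcongr with j; exact bourgainRadius_succ_sub_le j
    _ = 30 * ∑ j ∈ range L, expectedGap X (1 / 2 ^ (j + 2)) u v := by
        rw [← mul_sum]; ring

variable [Fintype V]

lemma sum_sum_mul_expectedGap (w : V → V → ℝ) (X : Finset V) (p : ℝ) :
    ∑ u, ∑ v, w u v * expectedGap X p u v = ∑ S ∈ X.powerset, bernoulliWeight X p S *
      ∑ u, ∑ v, w u v * |infDist u (S : Set V) - infDist v (S : Set V)| := by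
  simp only [expectedGap, mul_sum, sum_comm_cycle (u := X.powerset), mul_left_comm (w _ _)]

theorem exists_contraction_sum_mul_dist_le (w : V → V → ℝ) (hw : ∀ u v, 0 ≤ w u v)
    (X : Finset V) (hX : ∀ u v, w u v ≠ 0 → u ∈ X ∧ v ∈ X) {L : ℕ} (hL : #X < 2 ^ (L + 1)) :
    ∃ g : V → ℝ, (∀ u v, |g u - g v| ≤ dist u v) ∧
      ∑ u, ∑ v, w u v * dist u v ≤ 30 * L * ∑ u, ∑ v, w u v * |g u - g v| := by
  set F : Finset V → ℝ := fun S =>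
    ∑ u, ∑ v, w u v * |infDist u (S : Set V) - infDist v (S : Set V)|
  obtain ⟨S, -, hS⟩ := exists_max_image X.powerset F X.powerset_nonempty
  refine ⟨fun x => infDist x (S : Set V), fun u v => ?_, ?_⟩
  · simpa [Real.dist_eq] using (lipschitz_infDist_pt (S : Set V)).dist_le_mul u v
  have hp0 : ∀ j : ℕ, (0 : ℝ) ≤ 1 / 2 ^ (j + 2) := fun j => by positivity
  have hp1 : ∀ j : ℕ, (1 : ℝ) / 2 ^ (j + 2) ≤ 1 := fun j =>
    div_le_one_of_le₀ (one_le_pow₀ one_le_two) (by positivity)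
  calc ∑ u, ∑ v, w u v * dist u v
      ≤ ∑ u, ∑ v, w u v * (30 * ∑ j ∈ range L, expectedGap X (1 / 2 ^ (j + 2)) u v) := by
        refine sum_le_sum fun u _ => sum_le_sum fun v _ => ?_
        by_cases huv : w u v = 0
        · simp [huv]
        · exact mul_le_mul_of_nonneg_left
            (dist_le_thirty_mul_sum_expectedGap hL (hX u v huv).1 (hX u v huv).2) (hw u v)
    _ = 30 * ∑ j ∈ range L, ∑ u, ∑ v, w u v * expectedGap X (1 / 2 ^ (j + 2)) u v := by
        simp only [mul_sum, sum_comm_cycle (u := range L), mul_left_comm (w _ _)]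
    _ = 30 * ∑ j ∈ range L, ∑ S ∈ X.powerset,
          bernoulliWeight X (1 / 2 ^ (j + 2)) S * F S := by
        simp only [F, sum_sum_mul_expectedGap]
    _ ≤ 30 * ∑ j ∈ range L, F S := by
        gcongr with j
        exact bernoulliWeight.sum_mul_le (hp0 j) (hp1 j) hS
    _ = 30 * L * F S := by rw [sum_const, card_range, nsmul_eq_mul]; ring

end Metric

lemma exists_finset_forall_mem_card_le {V : Type*} [Fintype V] (w : V → V → ℝ) :
    ∃ X : Finset V, (∀ u v, w u v ≠ 0 → u ∈ X ∧ v ∈ X) ∧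
      #X ≤ 2 * #(univ.filter fun p : V × V => w p.1 p.2 ≠ 0) := by
  set P := univ.filter fun p : V × V => w p.1 p.2 ≠ 0
  refine ⟨P.image Prod.fst ∪ P.image Prod.snd, fun u v huv => ?_, ?_⟩
  · have : (u, v) ∈ P := mem_filter.mpr ⟨mem_univ _, huv⟩
    exact ⟨mem_union_left _ (mem_image_of_mem _ this),
      mem_union_right _ (mem_image_of_mem _ this)⟩
  · linarith [card_union_le (P.image Prod.fst) (P.image Prod.snd),
      card_image_le (s := P) (f := Prod.fst), card_image_le (s := P) (f := Prod.snd)]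

lemma nat_log_two_add_one_le_three_mul_log {k : ℕ} (hk : 2 ≤ k) :
    (Nat.log 2 k + 1 : ℝ) ≤ 3 * Real.log k := by
  have hm : (1 : ℝ) ≤ Nat.log 2 k := by exact_mod_cast Nat.log_pos one_lt_two hk
  have hpow : Nat.log 2 k * Real.log 2 ≤ Real.log k := by
    rw [← Real.log_pow]
    exact Real.log_le_log (by positivity) (by exact_mod_cast Nat.pow_log_le_self 2 (by omega))
  nlinarith [Real.log_two_gt_d9]

/-- **Bourgain line embeddings with low average distortion.**
There is a universal constant `C` such that for every finite metric space `(V,d)` with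
`n = |V| ≥ 2` and every nonnegative weight function `w`, there is a 1-Lipschitz map
`g : V → ℝ` with `Σ w(u,v)·d(u,v) ≤ C·(log n)·Σ w(u,v)·|g(u) − g(v)|`; moreover, if
`w` is supported on at most `k ≥ 2` pairs there is such a `g` with distortion
factor `C·(log k)`. -/
theorem line_embedding_average_distortion :
    ∃ C : ℝ, 0 < C ∧
      ∀ (V : Type) [MetricSpace V] [Fintype V] (w : V → V → ℝ),
        (∀ u v, 0 ≤ w u v) →
        (2 ≤ Fintype.card V →
          ∃ g : V → ℝ, (∀ u v : V, |g u - g v| ≤ dist u v) ∧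
            ∑ u : V, ∑ v : V, w u v * dist u v ≤
              C * Real.log (Fintype.card V) *
                ∑ u : V, ∑ v : V, w u v * |g u - g v|) ∧
        (∀ k : ℕ, 2 ≤ k →
          (Finset.univ.filter (fun p : V × V => w p.1 p.2 ≠ 0)).card ≤ k →
          ∃ g : V → ℝ, (∀ u v : V, |g u - g v| ≤ dist u v) ∧
            ∑ u : V, ∑ v : V, w u v * dist u v ≤
              C * Real.log k * ∑ u : V, ∑ v : V, w u v * |g u - g v|) := by
  refine ⟨90, by norm_num, fun V _ _ w hw => ?_⟩
  have hgap_nonneg (g : V → ℝ) : 0 ≤ ∑ u, ∑ v, w u v * |g u - g v| :=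
    sum_nonneg fun u _ => sum_nonneg fun v _ => mul_nonneg (hw u v) (abs_nonneg _)
  refine ⟨fun hn => ?_, fun k hk hsupp => ?_⟩
  · obtain ⟨g, hg, h⟩ := exists_contraction_sum_mul_dist_le w hw univ
      (fun u v _ => ⟨mem_univ u, mem_univ v⟩) (L := Nat.log 2 (Fintype.card V))
      (by rw [card_univ]; exact Nat.lt_pow_succ_log_self one_lt_two _)
    refine ⟨g, hg, h.trans (mul_le_mul_of_nonneg_right ?_ (hgap_nonneg g))⟩
    linarith [nat_log_two_add_one_le_three_mul_log hn]
  · obtain ⟨X, hX, hXcard⟩ := exists_finset_forall_mem_card_le w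
    obtain ⟨g, hg, h⟩ := exists_contraction_sum_mul_dist_le w hw X hX (L := Nat.log 2 k + 1)
      (by have := Nat.lt_pow_succ_log_self one_lt_two k; rw [pow_succ]; omega)
    refine ⟨g, hg, h.trans (mul_le_mul_of_nonneg_right ?_ (hgap_nonneg g))⟩
    push_cast
    linarith [nat_log_two_add_one_le_three_mul_log hk]
end

section
/- Let G=(V,E) be an undirected graph with nonnegative edge lengths ℓ, source-sink pairs (s_i,t_i) with demands D_i ≥ 0 (1 ≤ i ≤ k) satisfying Σ_i D_i·dist_ℓ(s_i,t_i) = 1, and let α > 0. Let g: V → [0,β] be 1-Lipschitz with respect to dist_ℓ and satisfy Σ_i D_i·dist_ℓ(s_i,t_i) ≤ α·Σ_i D_i·|g(s_i)−g(t_i)|. For θ ∈ (0,β) let S_θ = {u ∈ V : g(u) ≤ θ} and let D(δ(S_θ)) denote the total demand of pairs separated by the edge set δ(S_θ). Then ∫_0^β D(δ(S_θ)) dθ ≥ 1/α. -/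
open Finset MeasureTheory
open scoped ENNReal Classical

/-- `UWalk ep1 ep2 s t p`: in the undirected graph whose edge `e` has endpoints
`ep1 e` and `ep2 e`, the list of edges `p` forms a walk from `s` to `t`. -/
def UWalk {V E : Type} [DecidableEq V] (ep1 ep2 : E → V) : V → V → List E → Prop
  | s, t, [] => s = t
  | s, t, e :: p => (ep1 e = s ∨ ep2 e = s) ∧
      UWalk ep1 ep2 (if ep1 e = s then ep2 e else ep1 e) t p

/-- `F` separates `s` and `t`: they lie in different connected components of `G∖F`. -/
def USep {V E : Type} [DecidableEq V] (ep1 ep2 : E → V) (F : Finset E) (s t : V) : Prop :=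
  ¬ ∃ p : List E, UWalk ep1 ep2 s t p ∧ ∀ e ∈ p, e ∉ F

/-- `δ(S)`: the set of edges with exactly one endpoint in `S`. -/
def uvcut {V E : Type} [Fintype E] [DecidableEq V] (ep1 ep2 : E → V) (S : Finset V) :
    Finset E :=
  Finset.univ.filter (fun e => (ep1 e ∈ S ∧ ep2 e ∉ S) ∨ (ep1 e ∉ S ∧ ep2 e ∈ S))

/-- Shortest-path distance (in `ℝ≥0∞`, `⊤` when unreachable) under edge lengths `len`. -/
noncomputable def udist {V E : Type} [DecidableEq V] (ep1 ep2 : E → V) (len : E → ℝ)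
    (u v : V) : ℝ≥0∞ :=
  ⨅ p : { p : List E // UWalk ep1 ep2 u v p }, ENNReal.ofReal ((p.1.map len).sum)

/-!
A pair `(s i, t i)` is separated by `δ(S_θ)` for every threshold `θ` strictly between
`g (s i)` and `g (t i)`, since a walk avoiding `δ(S)` never leaves the side of `S` it starts on.
Hence the integral is at least `Σ D i * |g (s i) - g (t i)|`, which by hypothesis is at least
`(Σ D i * dist(s i, t i)) / α = 1 / α`.
-/

section Cut

variable {V E : Type} [Fintype E] [DecidableEq V] (ep1 ep2 : E → V) (S : Finset V)

theorem UWalk.mem_iff_of_forall_not_mem_uvcut :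
    ∀ {p : List E} {s t : V}, UWalk ep1 ep2 s t p →
      (∀ e ∈ p, e ∉ uvcut ep1 ep2 S) → (s ∈ S ↔ t ∈ S)
  | [], _, _, hw, _ => by rw [show _ = _ from hw]
  | e :: p, s, t, ⟨hend, hw⟩, hF => by
    have he : e ∉ uvcut ep1 ep2 S := hF e List.mem_cons_self
    simp only [uvcut, mem_filter, mem_univ, true_and, not_or, not_and, not_not] at he
    have hstep : s ∈ S ↔ (if ep1 e = s then ep2 e else ep1 e) ∈ S := by
      split_ifs with h
      · rw [← h]; tauto
      · rw [← hend.resolve_left h]; tauto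
    exact hstep.trans
      (mem_iff_of_forall_not_mem_uvcut hw fun e' he' => hF e' (List.mem_cons_of_mem _ he'))

theorem usep_uvcut_of_not_iff {s t : V} (h : ¬(s ∈ S ↔ t ∈ S)) :
    USep ep1 ep2 (uvcut ep1 ep2 S) s t := fun ⟨_, hw, hF⟩ =>
  h (UWalk.mem_iff_of_forall_not_mem_uvcut ep1 ep2 S hw hF)

theorem usep_uvcut_filter_le_of_mem_Ioo [Fintype V] {g : V → ℝ} {u v : V} {θ : ℝ}
    (hθ : θ ∈ Set.Ioo (min (g u) (g v)) (max (g u) (g v))) :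
    USep ep1 ep2 (uvcut ep1 ep2 (univ.filter fun w => g w ≤ θ)) u v := by
  apply usep_uvcut_of_not_iff
  simp only [mem_filter, mem_univ, true_and, Set.mem_Ioo, min_lt_iff, lt_max_iff] at hθ ⊢
  grind

end Cut

theorem measurableSet_setOf_filter_le {V : Type} [Fintype V] (g : V → ℝ)
    (P : Finset V → Prop) :
    MeasurableSet {θ : ℝ | P (univ.filter fun u => g u ≤ θ)} := by
  rw [← Set.preimage_ofPred_eq, ← Set.biUnion_preimage_singleton]
  refine MeasurableSet.biUnion (Set.to_countable _) fun S _ => ?_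
  have hlevel : (fun θ : ℝ => univ.filter fun u => g u ≤ θ) ⁻¹' {S} =
      ⋂ u, {θ | g u ≤ θ ↔ u ∈ S} := by
    ext θ
    simp [Finset.ext_iff]
  rw [hlevel]
  refine MeasurableSet.iInter fun u => ?_
  by_cases hu : u ∈ S
  · simp only [hu, iff_true]
    exact measurableSet_Ici
  · simp only [hu, iff_false, not_le]
    exact measurableSet_Iio

theorem mul_abs_sub_le_integral_indicator {A : Set ℝ} (hA : MeasurableSet A)
    {a b c β : ℝ} (ha : a ∈ Set.Icc 0 β) (hb : b ∈ Set.Icc 0 β) (hc : 0 ≤ c)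
    (hsub : Set.Ioo (min a b) (max a b) ⊆ A) :
    c * |a - b| ≤ ∫ θ in (0:ℝ)..β, A.indicator (fun _ => c) θ := by
  have hIoo : Set.Ioo (min a b) (max a b) ⊆ A ∩ Set.Ioc 0 β := fun θ hθ =>
    ⟨hsub hθ, (le_min ha.1 hb.1).trans_lt hθ.1, hθ.2.le.trans (max_le ha.2 hb.2)⟩
  have hlen : |a - b| ≤ volume.real (A ∩ Set.Ioc 0 β) := by
    rw [← max_sub_min_eq_abs', ← Real.volume_real_Ioo_of_le min_le_max]
    exact measureReal_mono hIoo (measure_inter_lt_top_of_right_ne_top measure_Ioc_lt_top.ne).ne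
  rw [intervalIntegral.integral_of_le (ha.1.trans ha.2), integral_indicator_const c hA,
    measureReal_restrict_apply hA, smul_eq_mul, mul_comm c]
  exact mul_le_mul_of_nonneg_right hlen hc

theorem demand_integral_lower_bound_general {V E : Type} [Fintype V] [Fintype E]
    [DecidableEq V]
    (ep1 ep2 : E → V) (ℓ : E → ℝ)
    {k : ℕ} (s t : Fin k → V) (D : Fin k → ℝ) (hD : ∀ i, 0 ≤ D i)
    (hdem : ∑ i : Fin k, ENNReal.ofReal (D i) * udist ep1 ep2 ℓ (s i) (t i) = 1)
    (α : ℝ) (hα : 0 < α)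
    (β : ℝ) (g : V → ℝ) (hg : ∀ u, g u ∈ Set.Icc (0:ℝ) β)
    (hdist : ∑ i : Fin k, ENNReal.ofReal (D i) * udist ep1 ep2 ℓ (s i) (t i) ≤
      ENNReal.ofReal (α * ∑ i : Fin k, D i * |g (s i) - g (t i)|)) :
    1 / α ≤ ∫ θ in (0:ℝ)..β, ∑ i : Fin k,
      if USep ep1 ep2 (uvcut ep1 ep2 (Finset.univ.filter (fun u => g u ≤ θ))) (s i) (t i)
      then D i else 0 := by
  set A : Fin k → Set ℝ := fun i =>
    {θ | USep ep1 ep2 (uvcut ep1 ep2 (univ.filter fun u => g u ≤ θ)) (s i) (t i)}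
  have hA : ∀ i, MeasurableSet (A i) := fun i =>
    measurableSet_setOf_filter_le g fun S => USep ep1 ep2 (uvcut ep1 ep2 S) (s i) (t i)
  have hsep : ∀ i, Set.Ioo (min (g (s i)) (g (t i))) (max (g (s i)) (g (t i))) ⊆ A i :=
    fun _ _ => usep_uvcut_filter_le_of_mem_Ioo ep1 ep2
  have hbound : 1 ≤ α * ∑ i, D i * |g (s i) - g (t i)| :=
    ENNReal.one_le_ofReal.mp (hdem ▸ hdist)
  calc 1 / α ≤ ∑ i, D i * |g (s i) - g (t i)| := by
        rwa [div_le_iff₀ hα, mul_comm]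
    _ ≤ ∑ i, ∫ θ in (0:ℝ)..β, (A i).indicator (fun _ => D i) θ :=
        sum_le_sum fun i _ =>
          mul_abs_sub_le_integral_indicator (hA i) (hg _) (hg _) (hD i) (hsep i)
    _ = ∫ θ in (0:ℝ)..β, ∑ i, (A i).indicator (fun _ => D i) θ :=
        (intervalIntegral.integral_finsetSum fun i _ =>
          ⟨(integrableOn_const (C := D i) measure_Ioc_lt_top.ne).indicator (hA i),
            (integrableOn_const (C := D i) measure_Ioc_lt_top.ne).indicator (hA i)⟩).symm
    _ = _ := rfl

/-- Let `G` be an undirected graph with nonnegative edge lengths `ℓ`,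
source-sink pairs `(s i, t i)` with demands `D i ≥ 0` satisfying
`Σ D i · dist_ℓ(s i, t i) = 1`, and let `α > 0`. If `g : V → [0,β]` is 1-Lipschitz
w.r.t. `dist_ℓ` and satisfies `Σ D i · dist_ℓ(s i, t i) ≤ α · Σ D i · |g(s i) − g(t i)|`,
then, with `S_θ = {u : g u ≤ θ}`, one has `∫_0^β D(δ(S_θ)) dθ ≥ 1/α`. -/
theorem demand_integral_lower_bound {V E : Type} [Fintype V] [Fintype E]
    [DecidableEq V] [DecidableEq E]
    (ep1 ep2 : E → V) (ℓ : E → ℝ) (hℓ : ∀ e, 0 ≤ ℓ e)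
    {k : ℕ} (s t : Fin k → V) (D : Fin k → ℝ) (hD : ∀ i, 0 ≤ D i)
    (hdem : ∑ i : Fin k, ENNReal.ofReal (D i) * udist ep1 ep2 ℓ (s i) (t i) = 1)
    (α : ℝ) (hα : 0 < α)
    (β : ℝ) (g : V → ℝ) (hg : ∀ u, g u ∈ Set.Icc (0:ℝ) β)
    (hLip : ∀ u v : V, ENNReal.ofReal |g u - g v| ≤ udist ep1 ep2 ℓ u v)
    (hdist : ∑ i : Fin k, ENNReal.ofReal (D i) * udist ep1 ep2 ℓ (s i) (t i) ≤
      ENNReal.ofReal (α * ∑ i : Fin k, D i * |g (s i) - g (t i)|)) :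
    1 / α ≤ ∫ θ in (0:ℝ)..β, ∑ i : Fin k,
      if USep ep1 ep2 (uvcut ep1 ep2 (Finset.univ.filter (fun u => g u ≤ θ))) (s i) (t i)
      then D i else 0 :=
  demand_integral_lower_bound_general ep1 ep2 ℓ s t D hD hdem α hα β g hg hdist
end
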